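/- arXiv:2007.07769 — 2 statements merged into one kernel-verified Lean document; each statement's English description precedes it below -/
import Mathlib

section
/- For a type X and base point x₀ : X, the set π⋆(X,x₀) of equivalence classes (modulo rewrite equality) of computational loops at x₀, with composition [r]∘[s] = [τ(s,r)], forms a group: composition is associative, the class of ρ is a two-sided identity, and [σ(r)] is a two-sided inverse of [r]. -/
/-- Computational paths between terms of a type `X`, generated by
reflexivity `rho`, symmetry `sigma` and transitivity `tau`. -/
inductive CPath {X : Type*} : X → X → Type _
  | rho (x : X) : CPath x x
  | sigma {x y : X} : CPath x y → CPath y x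
  | tau {x y z : X} : CPath x y → CPath y z → CPath x z

open CPath

/-- One-step rewriting (`▷_1rw`): an application of one rewrite rule of
`LND_EQ-TRS`, possibly inside a subterm context. -/
inductive Rw1 {X : Type*} : {x y : X} → CPath x y → CPath x y → Prop
  | sr (x : X) : Rw1 (sigma (rho x)) (rho x)
  | ss {x y : X} (r : CPath x y) : Rw1 (sigma (sigma r)) r
  | tr {x y : X} (r : CPath x y) : Rw1 (tau r (sigma r)) (rho x)
  | tsr {x y : X} (r : CPath x y) : Rw1 (tau (sigma r) r) (rho y)
  | trr {x y : X} (r : CPath x y) : Rw1 (tau r (rho y)) r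
  | tlr {x y : X} (r : CPath x y) : Rw1 (tau (rho x) r) r
  | tt {x y z w : X} (t : CPath x y) (r : CPath y z) (s : CPath z w) :
      Rw1 (tau (tau t r) s) (tau t (tau r s))
  | stss {x y z : X} (r : CPath x y) (s : CPath y z) :
      Rw1 (sigma (tau r s)) (tau (sigma s) (sigma r))
  | sigma_congr {x y : X} {r r' : CPath x y} : Rw1 r r' → Rw1 (sigma r) (sigma r')
  | tau_congr_left {x y z : X} {r r' : CPath x y} (s : CPath y z) :
      Rw1 r r' → Rw1 (tau r s) (tau r' s)
  | tau_congr_right {x y z : X} (r : CPath x y) {s s' : CPath y z} :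
      Rw1 s s' → Rw1 (tau r s) (tau r s')

/-- Rewrite equality `=_rw`: `s =_rw t` iff `t` is obtained from `s` by a finite
(possibly empty) sequence of rw-contractions and reversed rw-contractions. -/
def RwEq {X : Type*} {x y : X} : CPath x y → CPath x y → Prop :=
  Relation.EqvGen Rw1

theorem Rw1.rwEq {X : Type*} {x y : X} {r s : CPath x y} (h : Rw1 r s) : RwEq r s :=
  Relation.EqvGen.rel r s h

/-- The loops at a base point `x₀`, modulo rewrite equality, form a group under
composition `[r]∘[s] = [τ(s,r)]`: composition is associative, `[ρ]` is a
two-sided identity, and `[σ(r)]` is a two-sided inverse of `[r]`. -/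
theorem pi_star_group {X : Type*} (x₀ : X) :
    (∀ r s t : CPath x₀ x₀, RwEq (tau (tau t s) r) (tau t (tau s r))) ∧
    (∀ r : CPath x₀ x₀, RwEq (tau (rho x₀) r) r ∧ RwEq (tau r (rho x₀)) r) ∧
    (∀ r : CPath x₀ x₀,
      RwEq (tau r (sigma r)) (rho x₀) ∧ RwEq (tau (sigma r) r) (rho x₀)) :=
  ⟨fun r s t => (Rw1.tt t s r).rwEq,
    fun r => ⟨(Rw1.tlr r).rwEq, (Rw1.trr r).rwEq⟩,
    fun r => ⟨(Rw1.tr r).rwEq, (Rw1.tsr r).rwEq⟩⟩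
end

section
/- The fundamental groupoid Π⋆(X) of a type X — with objects the terms of X, morphisms the computational paths modulo rewrite equality, composition given by τ, and identities given by ρ — is a groupoid: composition is associative, ρ is a two-sided unit, and every morphism [r] has a two-sided inverse [σ(r)]. -/
open CPath

/-- The fundamental groupoid `Π⋆(X)`: objects are terms of `X`, morphisms are
computational paths modulo rewrite equality, composition is `τ` and identities
are `ρ`. It is a groupoid: composition is associative, `ρ` is a two-sided unit,
and every morphism `[r]` has two-sided inverse `[σ(r)]`. -/
theorem fundamental_groupoid_of_type {X : Type*} :
    (∀ {x y z w : X} (r : CPath x y) (s : CPath y z) (t : CPath z w),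
      RwEq (tau (tau r s) t) (tau r (tau s t))) ∧
    (∀ {x y : X} (r : CPath x y),
      RwEq (tau (rho x) r) r ∧ RwEq (tau r (rho y)) r) ∧
    (∀ {x y : X} (r : CPath x y),
      RwEq (tau r (sigma r)) (rho x) ∧ RwEq (tau (sigma r) r) (rho y)) :=
  ⟨fun r s t => (Rw1.tt r s t).rwEq,
   fun r => ⟨(Rw1.tlr r).rwEq, (Rw1.trr r).rwEq⟩,
   fun r => ⟨(Rw1.tr r).rwEq, (Rw1.tsr r).rwEq⟩⟩
end
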